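/- Let (x*, y*) be the unconstrained solution and (x_p*, y_p*) ∈ X × Y the constrained solution. Suppose U_Xᵀ A_ff U_X and U_Yᵀ A_ss U_Y are invertible, set c1 := U_X (U_Xᵀ A_ff U_X)^{-1} U_Xᵀ, c5 := U_Y (U_Yᵀ A_ss U_Y)^{-1} U_Yᵀ, m_x := σ_min(U_Xᵀ A_ff U_X), m̃_y := σ_min(U_Yᵀ A_ss U_Y), and suppose I − c5 A_sf c1 A_fs is invertible with κ' := ‖(I − c5 A_sf c1 A_fs)^{-1}‖₂. Then y_p* − y* = (I − c5 A_sf c1 A_fs)^{-1}[(I − c5 A_ss)(Π_Y y* − y*) − c5 A_sf (I − c1 A_ff)(Π_X x* − x*)], and consequently ‖y_p* − y*‖² ≤ 2κ'²(1 + ‖A_ss‖₂/m̃_y)² ε_y² + 2κ'²(‖A_sf‖₂/m̃_y)²(1 + ‖A_ff‖₂/m_x)² ε_x², where ε_x := ‖Π_X x* − x*‖ and ε_y := ‖Π_Y y* − y*‖. -/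

import Mathlib

open Matrix MeasureTheory Finset
open scoped BigOperators

noncomputable section
namespace TTSA

abbrev E (n : ℕ) : Type := EuclideanSpace ℝ (Fin n)

def mv {k l : ℕ} (M : Matrix (Fin k) (Fin l) ℝ) (x : E l) : E k :=
  Matrix.toEuclideanLin M x

def specNorm {k l : ℕ} (M : Matrix (Fin k) (Fin l) ℝ) : ℝ :=
  ‖LinearMap.toContinuousLinearMap (Matrix.toEuclideanLin M)‖

def sigmaMin {k : ℕ} (M : Matrix (Fin k) (Fin k) ℝ) : ℝ :=
  sInf ((fun v : E k => ‖mv M v‖) '' {v | ‖v‖ = 1})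

def resolvent {k l : ℕ} (U : Matrix (Fin k) (Fin l) ℝ) (A : Matrix (Fin k) (Fin k) ℝ) :
    Matrix (Fin k) (Fin k) ℝ :=
  U * (Uᵀ * A * U)⁻¹ * Uᵀ

open scoped RealInnerProductSpace

/-! Write `e_x = x_p - x*`, `e_y = y_p - y*`. Since `c1 Π_X = c1` and `c1 A_ff` is the identity
on `X`, applying `c1` to the Galerkin condition of the first block and subtracting the exact
equation gives `e_x = (I - c1 A_ff)(Π_X x* - x*) - c1 A_fs e_y`, and symmetrically
`e_y = (I - c5 A_ss)(Π_Y y* - y*) - c5 A_sf e_x`. Substituting the first relation into the second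
and inverting `I - c5 A_sf c1 A_fs` gives the identity. For the bound, `‖c1 v‖ ≤ ‖v‖ / m_x`
because `U_X` is an isometry and `σ_min` bounds `U_Xᵀ A_ff U_X` from below; then
`(a + b)² ≤ 2a² + 2b²`. -/

section MatrixAction

variable {k l p : ℕ}

lemma mv_add (M : Matrix (Fin k) (Fin l) ℝ) (x y : E l) : mv M (x + y) = mv M x + mv M y :=
  map_add _ x y

lemma mv_sub (M : Matrix (Fin k) (Fin l) ℝ) (x y : E l) : mv M (x - y) = mv M x - mv M y :=
  map_sub _ x y

lemma mv_zero (M : Matrix (Fin k) (Fin l) ℝ) : mv M (0 : E l) = 0 :=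
  map_zero _

lemma mv_smul (M : Matrix (Fin k) (Fin l) ℝ) (c : ℝ) (x : E l) : mv M (c • x) = c • mv M x :=
  map_smul _ c x

lemma sub_mv (M N : Matrix (Fin k) (Fin l) ℝ) (x : E l) : mv (M - N) x = mv M x - mv N x := by
  simp [mv]

lemma mul_mv (M : Matrix (Fin k) (Fin l) ℝ) (N : Matrix (Fin l) (Fin p) ℝ) (x : E p) :
    mv (M * N) x = mv M (mv N x) := by
  simp [mv]

lemma one_mv (x : E k) : mv 1 x = x := by
  simp [mv]

lemma mv_nonsing_inv_mv {M : Matrix (Fin k) (Fin k) ℝ} (hM : IsUnit M) (x : E k) :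
    mv M⁻¹ (mv M x) = x := by
  rw [← mul_mv, nonsing_inv_mul _ ((isUnit_iff_isUnit_det M).mp hM), one_mv]

lemma inner_mv (M : Matrix (Fin k) (Fin l) ℝ) (x : E l) (y : E k) :
    ⟪mv M x, y⟫ = ⟪x, mv Mᵀ y⟫ := by
  rw [mv, mv, ← conjTranspose_eq_transpose_of_trivial, toEuclideanLin_conjTranspose_eq_adjoint]
  exact (LinearMap.adjoint_inner_right _ _ _).symm

lemma specNorm_nonneg (M : Matrix (Fin k) (Fin l) ℝ) : 0 ≤ specNorm M :=
  norm_nonneg _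

lemma norm_mv_le (M : Matrix (Fin k) (Fin l) ℝ) (x : E l) : ‖mv M x‖ ≤ specNorm M * ‖x‖ :=
  (toEuclideanLin M).toContinuousLinearMap.le_opNorm x

end MatrixAction

section Orthonormal

variable {k l : ℕ} {U : Matrix (Fin k) (Fin l) ℝ}

lemma norm_mv_of_transpose_mul_self (hU : Uᵀ * U = 1) (w : E l) : ‖mv U w‖ = ‖w‖ := by
  refine (sq_eq_sq₀ (norm_nonneg _) (norm_nonneg _)).mp ?_
  rw [← real_inner_self_eq_norm_sq, ← real_inner_self_eq_norm_sq, inner_mv, ← mul_mv, hU, one_mv]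

lemma norm_mv_transpose_le (hU : Uᵀ * U = 1) (v : E k) : ‖mv Uᵀ v‖ ≤ ‖v‖ := by
  have h : ‖mv Uᵀ v‖ ^ 2 ≤ ‖mv Uᵀ v‖ * ‖v‖ :=
    calc ‖mv Uᵀ v‖ ^ 2 = ⟪mv U (mv Uᵀ v), v⟫ := by rw [inner_mv, real_inner_self_eq_norm_sq]
      _ ≤ ‖mv U (mv Uᵀ v)‖ * ‖v‖ := real_inner_le_norm _ _
      _ = ‖mv Uᵀ v‖ * ‖v‖ := by rw [norm_mv_of_transpose_mul_self hU]
  nlinarith [norm_nonneg (mv Uᵀ v), norm_nonneg v]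

end Orthonormal

section SigmaMin

variable {k : ℕ}

lemma sigmaMin_nonneg (M : Matrix (Fin k) (Fin k) ℝ) : 0 ≤ sigmaMin M :=
  Real.sInf_nonneg (by rintro _ ⟨v, -, rfl⟩; exact norm_nonneg _)

lemma sigmaMin_mul_norm_le (M : Matrix (Fin k) (Fin k) ℝ) (v : E k) :
    sigmaMin M * ‖v‖ ≤ ‖mv M v‖ := by
  rcases eq_or_ne v 0 with rfl | hv
  · simp [mv_zero]
  have hv' : ‖v‖ ≠ 0 := norm_ne_zero_iff.mpr hv
  have hle : sigmaMin M ≤ ‖mv M (‖v‖⁻¹ • v)‖ :=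
    csInf_le ⟨0, by rintro _ ⟨w, -, rfl⟩; exact norm_nonneg _⟩
      ⟨_, by simp [norm_smul, hv'], rfl⟩
  rw [mv_smul, norm_smul, norm_inv, norm_norm] at hle
  calc sigmaMin M * ‖v‖ ≤ ‖v‖⁻¹ * ‖mv M v‖ * ‖v‖ := by gcongr
    _ = ‖mv M v‖ := by field_simp

/-- The infimum is attained on the compact unit sphere, where an invertible `M` does not vanish. -/
lemma sigmaMin_pos {M : Matrix (Fin k) (Fin k) ℝ} (hM : IsUnit M) (hk : 0 < k) :
    0 < sigmaMin M := by
  have hcpt : IsCompact ((fun v : E k => ‖mv M v‖) '' {v | ‖v‖ = 1}) := by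
    refine IsCompact.image ?_ (toEuclideanLin M).continuous_of_finiteDimensional.norm
    simpa [Metric.sphere] using isCompact_sphere (0 : E k) 1
  obtain ⟨w, hw, hmin⟩ :=
    hcpt.sInf_mem ⟨_, EuclideanSpace.single ⟨0, hk⟩ 1, by simp, rfl⟩
  rw [sigmaMin, ← hmin, norm_pos_iff]
  intro h0
  have hw0 := mv_nonsing_inv_mv hM w
  rw [h0, mv_zero] at hw0
  simp [← hw0] at hw

lemma norm_le_norm_mv_div_sigmaMin {M : Matrix (Fin k) (Fin k) ℝ} (hM : IsUnit M) (v : E k) :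
    ‖v‖ ≤ ‖mv M v‖ / sigmaMin M := by
  rcases Nat.eq_zero_or_pos k with rfl | hk
  · rw [Subsingleton.elim v 0, norm_zero]
    exact div_nonneg (norm_nonneg _) (sigmaMin_nonneg M)
  rw [le_div_iff₀ (sigmaMin_pos hM hk), mul_comm]
  exact sigmaMin_mul_norm_le M v

end SigmaMin

section Resolvent

variable {k l p : ℕ} (U : Matrix (Fin k) (Fin l) ℝ) (A : Matrix (Fin k) (Fin k) ℝ)

lemma resolvent_mul_proj (hU : Uᵀ * U = 1) : resolvent U A * (U * Uᵀ) = resolvent U A := by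
  rw [resolvent, Matrix.mul_assoc, ← Matrix.mul_assoc Uᵀ, hU, Matrix.one_mul]

lemma resolvent_mul_mul_self (hA : IsUnit (Uᵀ * A * U)) : resolvent U A * A * U = U := by
  rw [resolvent, Matrix.mul_assoc, Matrix.mul_assoc, Matrix.mul_assoc, ← Matrix.mul_assoc Uᵀ,
    nonsing_inv_mul _ ((isUnit_iff_isUnit_det _).mp hA), Matrix.mul_one]

lemma mv_resolvent_mv_of_mem_range (hA : IsUnit (Uᵀ * A * U)) {x : E k}
    (hx : x ∈ Set.range (mv U)) : mv (resolvent U A) (mv A x) = x := by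
  obtain ⟨z, rfl⟩ := hx
  rw [← mul_mv, ← mul_mv, resolvent_mul_mul_self U A hA]

lemma norm_mv_resolvent_le (hU : Uᵀ * U = 1) (hA : IsUnit (Uᵀ * A * U)) (v : E k) :
    ‖mv (resolvent U A) v‖ ≤ ‖v‖ / sigmaMin (Uᵀ * A * U) := by
  have hres : mv (resolvent U A) v = mv U (mv (Uᵀ * A * U)⁻¹ (mv Uᵀ v)) := by
    rw [resolvent, mul_mv, mul_mv]
  rw [hres, norm_mv_of_transpose_mul_self hU]
  calc _ ≤ ‖mv (Uᵀ * A * U) (mv (Uᵀ * A * U)⁻¹ (mv Uᵀ v))‖ / sigmaMin (Uᵀ * A * U) :=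
        norm_le_norm_mv_div_sigmaMin hA _
    _ = ‖mv Uᵀ v‖ / sigmaMin (Uᵀ * A * U) := by
        rw [← mul_mv, mul_nonsing_inv _ ((isUnit_iff_isUnit_det _).mp hA), one_mv]
    _ ≤ ‖v‖ / sigmaMin (Uᵀ * A * U) :=
        div_le_div_of_nonneg_right (norm_mv_transpose_le hU v) (sigmaMin_nonneg _)

lemma norm_mv_resolvent_mul_le (hU : Uᵀ * U = 1) (hA : IsUnit (Uᵀ * A * U))
    (B : Matrix (Fin k) (Fin p) ℝ) (v : E p) :
    ‖mv (resolvent U A * B) v‖ ≤ specNorm B / sigmaMin (Uᵀ * A * U) * ‖v‖ := by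
  rw [mul_mv, div_mul_eq_mul_div]
  exact (norm_mv_resolvent_le U A hU hA _).trans
    (div_le_div_of_nonneg_right (norm_mv_le B v) (sigmaMin_nonneg _))

lemma norm_mv_one_sub_resolvent_mul_le (hU : Uᵀ * U = 1) (hA : IsUnit (Uᵀ * A * U)) (x : E k) :
    ‖mv (1 - resolvent U A * A) x‖ ≤ (1 + specNorm A / sigmaMin (Uᵀ * A * U)) * ‖x‖ := by
  rw [sub_mv, one_mv, add_mul, one_mul]
  exact (norm_sub_le _ _).trans (by gcongr; exact norm_mv_resolvent_mul_le U A hU hA A x)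

/-- One block row of a Galerkin system: `x ∈ range U` solves the projected equation whose exact
solution is `(s, t)`, and the other block enters through its error `y - t`. -/
lemma galerkin_error_eq (hU : Uᵀ * U = 1) (hA : IsUnit (Uᵀ * A * U))
    (B : Matrix (Fin k) (Fin p) ℝ) {x s b : E k} {y t : E p} (hx : x ∈ Set.range (mv U))
    (hs : mv A s + mv B t = b) (h : mv (U * Uᵀ) (mv A x + mv B y - b) = 0) :
    x - s = mv (1 - resolvent U A * A) (mv (U * Uᵀ) s - s) - mv (resolvent U A * B) (y - t) := by
  subst hs
  have hres : mv (resolvent U A) (mv A x + mv B y - (mv A s + mv B t)) = 0 := by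
    rw [← resolvent_mul_proj U A hU, mul_mv, h, mv_zero]
  have hproj : mv (resolvent U A) (mv A (mv (U * Uᵀ) s)) = mv (U * Uᵀ) s :=
    mv_resolvent_mv_of_mem_range U A hA ⟨mv Uᵀ s, (mul_mv U Uᵀ s).symm⟩
  simp only [mv_add, mv_sub, mv_resolvent_mv_of_mem_range U A hA hx] at hres
  rw [sub_mv, one_mv, mul_mv (resolvent U A) A, mul_mv (resolvent U A) B, mv_sub, mv_sub, mv_sub,
    mv_sub, hproj]
  linear_combination (norm := module) hres

end Resolvent

lemma eq_mv_nonsing_inv_of_eq_sub_of_eq_sub {k l : ℕ} {P : Matrix (Fin l) (Fin k) ℝ}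
    {Q : Matrix (Fin k) (Fin l) ℝ} {ex ux : E l} {ey uy : E k} (hx : ex = ux - mv P ey)
    (hy : ey = uy - mv Q ex) (hK : IsUnit (1 - Q * P)) :
    ey = mv (1 - Q * P)⁻¹ (uy - mv Q ux) := by
  have h : mv (1 - Q * P) ey = uy - mv Q ux := by
    rw [sub_mv, one_mv, mul_mv]
    nth_rewrite 1 [hy]
    rw [hx, mv_sub]
    abel
  rw [← h, mv_nonsing_inv_mv hK]

lemma sq_norm_mv_sub_le {k l : ℕ} (K : Matrix (Fin k) (Fin l) ℝ) {u v : E l} {α β : ℝ}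
    (hu : ‖u‖ ≤ α) (hv : ‖v‖ ≤ β) :
    ‖mv K (u - v)‖ ^ 2 ≤ 2 * specNorm K ^ 2 * α ^ 2 + 2 * specNorm K ^ 2 * β ^ 2 :=
  calc _ ≤ (specNorm K * α + specNorm K * β) ^ 2 := by
        rw [← mul_add]
        exact pow_le_pow_left₀ (norm_nonneg _) ((norm_mv_le K _).trans
          (mul_le_mul_of_nonneg_left ((norm_sub_le u v).trans (add_le_add hu hv))
            (specNorm_nonneg K))) 2
    _ ≤ 2 * ((specNorm K * α) ^ 2 + (specNorm K * β) ^ 2) := add_sq_le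
    _ = _ := by ring

/-- `c1 = resolvent UX Aff`, `c5 = resolvent UY Ass`, `m_x = sigmaMin (UXᵀ * Aff * UX)`,
`m̃_y = sigmaMin (UYᵀ * Ass * UY)`, and `κ' = specNorm (1 - c5 * Asf * c1 * Afs)⁻¹`. -/
theorem slow_approximation_error_bound {n m d r : ℕ}
    (Aff : Matrix (Fin n) (Fin n) ℝ) (Afs : Matrix (Fin n) (Fin m) ℝ)
    (Asf : Matrix (Fin m) (Fin n) ℝ) (Ass : Matrix (Fin m) (Fin m) ℝ)
    (b1 : E n) (b2 : E m)
    (UX : Matrix (Fin n) (Fin d) ℝ) (UY : Matrix (Fin m) (Fin r) ℝ)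
    (hUX : UXᵀ * UX = 1) (hUY : UYᵀ * UY = 1)
    (xs : E n) (ys : E m)
    (hxs : mv Aff xs + mv Afs ys = b1) (hys : mv Asf xs + mv Ass ys = b2)
    (xp : E n) (yp : E m)
    (hxp : xp ∈ Set.range (mv UX)) (hyp : yp ∈ Set.range (mv UY))
    (hsolx : mv (UX * UXᵀ) (mv Aff xp + mv Afs yp - b1) = 0)
    (hsoly : mv (UY * UYᵀ) (mv Asf xp + mv Ass yp - b2) = 0)
    (h1 : IsUnit (UXᵀ * Aff * UX)) (h5 : IsUnit (UYᵀ * Ass * UY))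
    (hcoup : IsUnit ((1 : Matrix (Fin m) (Fin m) ℝ) -
      resolvent UY Ass * Asf * resolvent UX Aff * Afs)) :
    yp - ys =
      mv ((1 - resolvent UY Ass * Asf * resolvent UX Aff * Afs)⁻¹)
        (mv (1 - resolvent UY Ass * Ass) (mv (UY * UYᵀ) ys - ys) -
         mv (resolvent UY Ass * Asf * (1 - resolvent UX Aff * Aff))
           (mv (UX * UXᵀ) xs - xs)) ∧
    ‖yp - ys‖ ^ 2 ≤
      2 * specNorm ((1 - resolvent UY Ass * Asf * resolvent UX Aff * Afs)⁻¹) ^ 2 *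
        (1 + specNorm Ass / sigmaMin (UYᵀ * Ass * UY)) ^ 2 *
        ‖mv (UY * UYᵀ) ys - ys‖ ^ 2 +
      2 * specNorm ((1 - resolvent UY Ass * Asf * resolvent UX Aff * Afs)⁻¹) ^ 2 *
        (specNorm Asf / sigmaMin (UYᵀ * Ass * UY)) ^ 2 *
        (1 + specNorm Aff / sigmaMin (UXᵀ * Aff * UX)) ^ 2 *
        ‖mv (UX * UXᵀ) xs - xs‖ ^ 2 := by
  have hex := galerkin_error_eq UX Aff hUX h1 Afs hxp hxs hsolx
  rw [add_comm] at hys hsoly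
  have hey := galerkin_error_eq UY Ass hUY h5 Asf hyp hys hsoly
  have hid := eq_mv_nonsing_inv_of_eq_sub_of_eq_sub hex hey (by rwa [← Matrix.mul_assoc])
  rw [← Matrix.mul_assoc, ← mul_mv] at hid
  have hy := norm_mv_one_sub_resolvent_mul_le UY Ass hUY h5 (mv (UY * UYᵀ) ys - ys)
  have hx : ‖mv (resolvent UY Ass * Asf * (1 - resolvent UX Aff * Aff)) (mv (UX * UXᵀ) xs - xs)‖
      ≤ specNorm Asf / sigmaMin (UYᵀ * Ass * UY) *
        ((1 + specNorm Aff / sigmaMin (UXᵀ * Aff * UX)) * ‖mv (UX * UXᵀ) xs - xs‖) := by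
    rw [mul_mv]
    exact (norm_mv_resolvent_mul_le UY Ass hUY h5 Asf _).trans
      (mul_le_mul_of_nonneg_left (norm_mv_one_sub_resolvent_mul_le UX Aff hUX h1 _)
        (div_nonneg (specNorm_nonneg _) (sigmaMin_nonneg _)))
  refine ⟨hid, ?_⟩
  rw [hid]
  exact (sq_norm_mv_sub_le _ hy hx).trans_eq (by ring)

end TTSA
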